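/- Let ε > 0, δ > 0, let L ≥ 2 be an integer with L > 2/ε, and let u : S¹ → ℝ be continuous. Suppose there exist x, y ∈ S¹ such that min_{z ∈ [x, x+ε]} u(z) > δ/4 + max_{z ∈ [y, y+ε]} u(z). Then for every g ∈ L²(S¹, Leb) that is measurable with respect to T_L^{-1}(Borel) (equivalently, g(z + 1/L) = g(z) for Lebesgue-almost every z), one has ‖u − g‖²_{L²} ≥ δ²ε/64. -/

import Mathlib

/-!
Setting: the circle `S¹ = ℝ/ℤ` with Lebesgue (Haar) probability measure, realized as
`1`-periodic functions on `ℝ` together with Lebesgue measure restricted to `(0, 1]`.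
For an integer `b ≥ 2`, the map `T_b x = bx (mod 1)` lifts to `x ↦ b * x` on `ℝ`, and its
Perron–Frobenius operator (the `L²`-adjoint of the Koopman operator `g ↦ g ∘ T_b`) is
`(T̂*_b g)(x) = (1/b) ∑_{j<b} g((x+j)/b)`.
-/

open MeasureTheory ProbabilityTheory Filter Function
open scoped ENNReal Topology

/-- The Lebesgue (Haar) probability measure of the circle, realized on `(0, 1] ⊆ ℝ`. -/
noncomputable def circleMeasure : Measure ℝ := volume.restrict (Set.Ioc 0 1)

/-- The Perron–Frobenius operator of `T_b x = bx (mod 1)`, acting on (`1`-periodic)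
functions on `ℝ`: `(T̂*_b g)(x) = (1/b) ∑_{j<b} g((x+j)/b)`. -/
noncomputable def PFc (b : ℕ) (g : ℝ → ℝ) : ℝ → ℝ :=
  fun x => (1 / (b : ℝ)) * ∑ j ∈ Finset.range b, g ((x + j) / b)

/-- `T̂*_{b_1} ⋯ T̂*_{b_k} g` for a finite sequence `[b_1, …, b_k]`. -/
noncomputable def PFcList (l : List ℕ) (g : ℝ → ℝ) : ℝ → ℝ := l.foldr PFc g

/-- `PFcSeg a i j = T̂*_{[i..j]} = T̂*_{a_j} ⋯ T̂*_{a_i}` for `i ≤ j`, the identity otherwise. -/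
noncomputable def PFcSeg (a : ℕ → ℕ) (i : ℕ) : ℕ → (ℝ → ℝ) → (ℝ → ℝ)
  | 0 => id
  | j + 1 => if i ≤ j + 1 then fun g => PFc (a (j + 1)) (PFcSeg a i j g) else id

/-- `u_k = ∑_{i=1}^k T̂*_{[i+1..k]} f`. -/
noncomputable def uc (a : ℕ → ℕ) (f : ℝ → ℝ) (k : ℕ) : ℝ → ℝ :=
  fun x => ∑ i ∈ Finset.Icc 1 k, PFcSeg a (i + 1) k f x

/-- `T_{[k]} = T_{a_k} ∘ ⋯ ∘ T_{a_1}` is multiplication (mod 1) by `∏_{i=1}^k a_i`. -/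
def prodA (a : ℕ → ℕ) (k : ℕ) : ℕ := ∏ i ∈ Finset.Icc 1 k, a i

/-- The Birkhoff-like sums `S_n = ∑_{k=1}^n f ∘ T_{[k]}`, for a `1`-periodic `f`. -/
noncomputable def Sc (a : ℕ → ℕ) (f : ℝ → ℝ) (n : ℕ) : ℝ → ℝ :=
  fun x => ∑ k ∈ Finset.Icc 1 n, f ((prodA a k : ℝ) * x)

/-- The `C¹`-norm `‖g‖ = sup|g| + sup|g'|`. -/
noncomputable def Cnorm (g : ℝ → ℝ) : ℝ := (⨆ x : ℝ, |g x|) + ⨆ x : ℝ, |deriv g x|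

/-- The pullback σ-algebra `T_b^{-1}(Borel)` on the circle, realized on `ℝ` as the σ-algebra
generated by the lift `x ↦ fract (b * x)` of `T_b`. -/
noncomputable def circleSigma (b : ℕ) : MeasurableSpace ℝ :=
  MeasurableSpace.comap (fun x => Int.fract ((b : ℝ) * x)) Real.measurableSpace

/-- `cos²χ_k = ‖E[u_k | T_{a_{k+1}}^{-1}(Borel)]‖²_{L²} / ‖u_k‖²_{L²}` (`= 0` when `u_k = 0`,
by the convention `c / 0 = 0`). -/
noncomputable def cos2c (a : ℕ → ℕ) (f : ℝ → ℝ) (k : ℕ) : ℝ :=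
  (∫ x, ((circleMeasure[uc a f k|circleSigma (a (k + 1))]) x) ^ 2 ∂circleMeasure) /
    ∫ x, (uc a f k x) ^ 2 ∂circleMeasure

/-!
Write `c = 1 / L`. As `g` is `c`-periodic almost everywhere, for a point `z` of the arc at `x`
whose translate `z + m c` lies in the arc at `y` we get
`(u z - g z)² + (u (z + m c) - g (z + m c))² ≥ (u z - u (z + m c))² / 2 > δ² / 32`.
Taking for `x + m c` the first point of `x + cℤ` at or after `y`, these pairs cover a piece of
the arc at `x` of length more than `ε - c ≥ ε / 2`. Moved by an integer, the arc at `y` is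
disjoint from the arc at `x` and both fit in one period, since `u` is `1`-periodic and strictly
larger on the first arc; so the pieces and their translates contribute at least
`(δ² / 32) (ε / 2)` to `‖u - g‖²`.
-/

open Set

namespace Function.Periodic

variable {α : Type*} {f : ℝ → α} {T : ℝ}

lemma apply_vadd_zmultiples (hf : Periodic f T) (g : AddSubgroup.zmultiples T) (x : ℝ) :
    f (g +ᵥ x) = f x := by
  obtain ⟨n, hn⟩ := AddSubgroup.mem_zmultiples_iff.mp g.2
  rw [AddSubgroup.vadd_def, vadd_eq_add, ← hn, add_comm]
  exact hf.zsmul n x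

lemma setLIntegral_Ioc_eq {f : ℝ → ℝ≥0∞} (hf : Periodic f T) (hT : 0 < T) (s t : ℝ) :
    ∫⁻ x in Ioc s (s + T), f x = ∫⁻ x in Ioc t (t + T), f x :=
  (isAddFundamentalDomain_Ioc hT s).setLIntegral_eq (isAddFundamentalDomain_Ioc hT t) f
    hf.apply_vadd_zmultiples

lemma aestronglyMeasurable_restrict_Ioc_iff [TopologicalSpace α]
    [TopologicalSpace.PseudoMetrizableSpace α] (hf : Periodic f T) (hT : 0 < T) (s t : ℝ) :
    AEStronglyMeasurable f (volume.restrict (Ioc s (s + T))) ↔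
      AEStronglyMeasurable f (volume.restrict (Ioc t (t + T))) :=
  (isAddFundamentalDomain_Ioc hT s).aestronglyMeasurable_on_iff (isAddFundamentalDomain_Ioc hT t)
    hf.apply_vadd_zmultiples

end Function.Periodic

section AddGroup

variable {G α : Type*} [AddGroup G] [MeasurableSpace G] [MeasurableAdd G] {μ : Measure G}
  [μ.IsAddRightInvariant]

lemma ae_add_nsmul_eq_of_ae_add_eq {f : G → α} {c : G} (h : ∀ᵐ z ∂μ, f (z + c) = f z) (n : ℕ) :
    ∀ᵐ z ∂μ, f (z + n • c) = f z := by
  induction n with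
  | zero => simp
  | succ n ih =>
    have ih' := (measurePreserving_add_right μ c).quasiMeasurePreserving.ae ih
    filter_upwards [ih', h] with z hz hc
    rw [succ_nsmul', ← add_assoc, hz, hc]

lemma mul_measure_preimage_add_le_setLIntegral_add {f : G → ℝ≥0∞} {s : G} {B : Set G}
    {κ : ℝ≥0∞} (hf : AEMeasurable f (μ.restrict ((· + s) ⁻¹' B)))
    (h : ∀ᵐ z ∂μ.restrict ((· + s) ⁻¹' B), κ ≤ f z + f (z + s)) :
    κ * μ ((· + s) ⁻¹' B) ≤ (∫⁻ z in (· + s) ⁻¹' B, f z ∂μ) + ∫⁻ z in B, f z ∂μ := by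
  rw [← (measurePreserving_add_right μ s).setLIntegral_comp_preimage_emb
    (measurableEmbedding_addRight s) f B, ← lintegral_add_left' hf, ← setLIntegral_const]
  exact lintegral_mono_ae h

end AddGroup

lemma Continuous.memLp_restrict_of_isCompact {X E : Type*} [TopologicalSpace X] [T2Space X]
    [MeasurableSpace X] [OpensMeasurableSpace X] [NormedAddCommGroup E]
    [SecondCountableTopologyEither X E] {μ : Measure X}
    [IsFiniteMeasureOnCompacts μ] {f : X → E} (hf : Continuous f) {K : Set X} (hK : IsCompact K)
    (p : ℝ≥0∞) : MemLp f p (μ.restrict K) := by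
  obtain ⟨C, hC⟩ := hK.exists_bound_of_continuousOn hf.continuousOn
  have : IsFiniteMeasure (μ.restrict K) := ⟨by
    rw [Measure.restrict_apply_univ]; exact hK.measure_lt_top⟩
  exact .of_bound hf.aestronglyMeasurable C (ae_restrict_of_forall_mem hK.measurableSet hC)

lemma sq_div_le_sq_sub_add_sq_sub {a b c δ : ℝ} (hδ : 0 ≤ δ) (h : δ / 4 + b < a) :
    δ ^ 2 / 32 ≤ (a - c) ^ 2 + (b - c) ^ 2 := by
  have hab : (δ / 4) ^ 2 ≤ (a - b) ^ 2 := pow_le_pow_left₀ (by positivity) (by linarith) 2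
  have := add_sq_le (a := a - c) (b := c - b)
  nlinarith

lemma Function.Periodic.add_lt_and_add_lt_of_forall_Icc_lt {u : ℝ → ℝ} (hu : Periodic u 1)
    {x y ε : ℝ} (hε : 0 ≤ ε) (hy : y ∈ Ioc x (x + 1))
    (hxy : ∀ z ∈ Icc x (x + ε), ∀ w ∈ Icc y (y + ε), u w < u z) :
    x + ε < y ∧ y + ε < x + 1 := by
  constructor
  · by_contra! h
    exact lt_irrefl _ (hxy y ⟨hy.1.le, h⟩ y ⟨le_rfl, by linarith⟩)
  · by_contra! h
    have := hxy x ⟨le_rfl, by linarith⟩ (x + 1) ⟨hy.2, h⟩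
    rw [hu x] at this
    exact lt_irrefl _ this

lemma ofReal_le_setLIntegral_Ioc_sq_sub {u g : ℝ → ℝ} {ε δ c x y : ℝ} (hε : 0 ≤ ε) (hδ : 0 ≤ δ)
    (hc : 0 < c) (hcε : 2 * c ≤ ε) (hu : Periodic u 1) (hg : Periodic g 1)
    (hmeas : AEStronglyMeasurable (fun z ↦ (u z - g z) ^ 2) (volume.restrict (Ioc 0 1)))
    (hg_ae : ∀ᵐ z, g (z + c) = g z) (hy : y ∈ Ioc x (x + 1))
    (hxy : ∀ z ∈ Icc x (x + ε), ∀ w ∈ Icc y (y + ε), δ / 4 + u w < u z) :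
    ENNReal.ofReal (δ ^ 2 * ε / 64) ≤
      ∫⁻ z in Ioc 0 1, ENNReal.ofReal ((u z - g z) ^ 2) := by
  have hsq : Periodic (fun z ↦ (u z - g z) ^ 2) 1 := fun z ↦ by simp only [hu z, hg z]
  set F : ℝ → ℝ≥0∞ := fun z ↦ ENNReal.ofReal ((u z - g z) ^ 2)
  obtain ⟨hxε, hyε⟩ := hu.add_lt_and_add_lt_of_forall_Icc_lt hε hy
    fun z hz w hw ↦ (le_add_of_nonneg_left (by positivity)).trans_lt (hxy z hz w hw)
  set m := ⌈(y - x) / c⌉₊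
  have hm_ge : y - x ≤ m * c := (div_le_iff₀ hc).mp (Nat.le_ceil _)
  have hm_lt : m * c < y - x + c := by
    have := (mul_lt_mul_iff_of_pos_right hc).mpr
      (Nat.ceil_lt_add_one (div_nonneg (sub_nonneg.mpr hy.1.le) hc.le))
    rwa [add_mul, div_mul_cancel₀ _ hc.ne', one_mul] at this
  have hpre : (· + m * c) ⁻¹' Ioc (x + m * c) (y + ε) = Ioc x (y + ε - m * c) := by
    rw [preimage_add_const_Ioc, add_sub_cancel_right]
  have hFmeas : AEMeasurable F (volume.restrict (Ioc x (y + ε - m * c))) := by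
    have h01 : AEStronglyMeasurable (fun z ↦ (u z - g z) ^ 2) (volume.restrict (Ioc x (x + 1))) :=
      (hsq.aestronglyMeasurable_restrict_Ioc_iff one_pos 0 x).mp (by simpa using hmeas)
    exact (h01.mono_measure (Measure.restrict_mono (Ioc_subset_Ioc_right (by linarith))
      le_rfl)).aemeasurable.ennreal_ofReal
  have hpair : ∀ᵐ z ∂volume.restrict (Ioc x (y + ε - m * c)),
      ENNReal.ofReal (δ ^ 2 / 32) ≤ F z + F (z + m * c) := by
    filter_upwards [ae_restrict_mem measurableSet_Ioc,
      ae_restrict_of_ae (ae_add_nsmul_eq_of_ae_add_eq hg_ae m)] with z ⟨hz₁, hz₂⟩ hgz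
    rw [nsmul_eq_mul] at hgz
    rw [← ENNReal.ofReal_add (sq_nonneg _) (sq_nonneg _), hgz]
    exact ENNReal.ofReal_le_ofReal <| sq_div_le_sq_sub_add_sq_sub hδ <|
      hxy z ⟨hz₁.le, by linarith⟩ (z + m * c) ⟨by linarith, by linarith⟩
  calc ENNReal.ofReal (δ ^ 2 * ε / 64)
      ≤ ENNReal.ofReal (δ ^ 2 / 32) * volume (Ioc x (y + ε - m * c)) := by
        rw [Real.volume_Ioc, ← ENNReal.ofReal_mul (by positivity)]
        exact ENNReal.ofReal_le_ofReal (by nlinarith)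
    _ ≤ (∫⁻ z in Ioc x (y + ε - m * c), F z) + ∫⁻ z in Ioc (x + m * c) (y + ε), F z := by
        rw [← hpre]
        exact mul_measure_preimage_add_le_setLIntegral_add (hpre ▸ hFmeas) (hpre ▸ hpair)
    _ = ∫⁻ z in Ioc x (y + ε - m * c) ∪ Ioc (x + m * c) (y + ε), F z :=
        (lintegral_union measurableSet_Ioc (Ioc_disjoint_Ioc_of_le (by linarith))).symm
    _ ≤ ∫⁻ z in Ioc x (x + 1), F z :=
        lintegral_mono_set (union_subset (Ioc_subset_Ioc_right (by linarith))
          (Ioc_subset_Ioc (by linarith) hyε.le))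
    _ = ∫⁻ z in Ioc 0 1, F z := by
        simpa using (hsq.comp ENNReal.ofReal).setLIntegral_Ioc_eq one_pos x 0

theorem dist_sq_to_pullback_measurable_ge
    (ε δ : ℝ) (hε : 0 < ε) (hδ : 0 < δ)
    (L : ℕ) (hLε : 2 / ε < (L : ℝ))
    (u : ℝ → ℝ) (hu_cont : Continuous u) (hu_per : Periodic u 1)
    (x y : ℝ)
    (hxy : ∀ z ∈ Set.Icc x (x + ε), ∀ w ∈ Set.Icc y (y + ε), δ / 4 + u w < u z)
    (g : ℝ → ℝ) (hg_per : Periodic g 1) (hg_L2 : MemLp g 2 circleMeasure)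
    (hg_meas : ∀ᵐ z ∂(volume : Measure ℝ), g (z + 1 / L) = g z) :
    δ ^ 2 * ε / 64 ≤ ∫ z, (u z - g z) ^ 2 ∂circleMeasure := by
  have hL : (0 : ℝ) < L := (div_pos two_pos hε).trans hLε
  have hcε : 2 * (1 / (L : ℝ)) ≤ ε := by
    rw [div_lt_iff₀ hε] at hLε
    rw [mul_one_div, div_le_iff₀ hL]
    linarith
  obtain ⟨n, hn, -⟩ := existsUnique_add_zsmul_mem_Ioc one_pos y x
  have hxy' : ∀ z ∈ Icc x (x + ε), ∀ w ∈ Icc (y + n • 1) (y + n • 1 + ε), δ / 4 + u w < u z := by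
    intro z hz w hw
    rw [← hu_per.sub_zsmul_eq n]
    exact hxy z hz _ ⟨by linarith [hw.1], by linarith [hw.2]⟩
  have hu_L2 : MemLp u 2 circleMeasure :=
    (hu_cont.memLp_restrict_of_isCompact isCompact_Icc 2).mono_measure
      (Measure.restrict_mono Ioc_subset_Icc_self le_rfl)
  have hint : Integrable (fun z ↦ (u z - g z) ^ 2) circleMeasure :=
    (hu_L2.sub hg_L2).integrable_sq
  rw [← ENNReal.ofReal_le_ofReal_iff (integral_nonneg fun _ ↦ sq_nonneg _),
    ofReal_integral_eq_lintegral_ofReal hint (ae_of_all _ fun _ ↦ sq_nonneg _)]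
  exact ofReal_le_setLIntegral_Ioc_sq_sub hε.le hδ.le (by positivity) hcε hu_per hg_per
    ((hu_cont.aestronglyMeasurable.sub hg_L2.1).pow 2) hg_meas hn hxy'
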